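/- Let (S, Σ) be a measurable space, {μ_n} a sequence of measures converging setwise to a finite measure μ, and {f_n} a sequence of measurable extended-real-valued functions on S. If {f_n} converges to a measurable real-valued function f in measure μ and {f_n} is asymptotically uniformly integrable with respect to {μ_n}, then lim_{n→∞} ∫_S f_n(s) μ_n(ds) = ∫_S f(s) μ(ds). -/

import Mathlib

open MeasureTheory Filter Metric Topology
open scoped ENNReal

/-- The positive part of an extended real, as a value in `ℝ≥0∞`. -/
noncomputable def EReal.posENN (x : EReal) : ℝ≥0∞ := (max x 0).abs

/-- The negative part of an extended real, as a value in `ℝ≥0∞`. -/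
noncomputable def EReal.negENN (x : EReal) : ℝ≥0∞ := (max (-x) 0).abs

/-- The integral of an extended-real-valued function: `∫ f⁺ dμ − ∫ f⁻ dμ` (in `EReal`). -/
noncomputable def eIntegral {S : Type*} [MeasurableSpace S]
    (μ : Measure S) (f : S → EReal) : EReal :=
  ((∫⁻ s, (f s).posENN ∂μ : ℝ≥0∞) : EReal) - ((∫⁻ s, (f s).negENN ∂μ : ℝ≥0∞) : EReal)

/-- The integral of `f` w.r.t. `μ` is defined: at least one of `∫ f⁺ dμ`, `∫ f⁻ dμ` is finite. -/
def IntegralDefined {S : Type*} [MeasurableSpace S] (μ : Measure S) (f : S → EReal) : Prop :=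
  (∫⁻ s, (f s).posENN ∂μ) ≠ ⊤ ∨ (∫⁻ s, (f s).negENN ∂μ) ≠ ⊤

/-- The integral `∫_S |f(s)| 1{|f(s)| ≥ K} μ(ds)`. -/
noncomputable def tailIntegral {S : Type*} [MeasurableSpace S]
    (μ : Measure S) (f : S → EReal) (K : ℝ) : ℝ≥0∞ :=
  ∫⁻ s in {s | (K : EReal) ≤ (f s).abs}, (f s).abs ∂μ

/-- `{f_n}` is asymptotically uniformly integrable w.r.t. `{μ_n}`. -/
def AUI {S : Type*} [MeasurableSpace S] (μ : ℕ → Measure S) (f : ℕ → S → EReal) : Prop :=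
  Tendsto (fun K : ℝ => limsup (fun n => tailIntegral (μ n) (f n) K) atTop) atTop (𝓝 0)

/-- `{μ_n}` converges setwise to `μ`: `μ_n(C) → μ(C)` for every measurable set `C`. -/
def SetwiseConv {S : Type*} [MeasurableSpace S] (μ : ℕ → Measure S) (ν : Measure S) : Prop :=
  ∀ C : Set S, MeasurableSet C → Tendsto (fun n => μ n C) atTop (𝓝 (ν C))

/-- `{f_n}` converges to `f` in measure `μ`: `μ({s : |f_n(s) − f(s)| ≥ ε}) → 0` for all
`ε > 0`. -/
def ConvInMeasureE {S : Type*} [MeasurableSpace S]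
    (f : ℕ → S → EReal) (g : S → ℝ) (μ : Measure S) : Prop :=
  ∀ ε : ℝ, 0 < ε →
    Tendsto (fun n => μ {s | ENNReal.ofReal ε ≤ (f n s - ((g s : ℝ) : EReal)).abs})
      atTop (𝓝 0)

/-
Setwise convergence makes `w ↦ ∫ w dμₙ` lower semicontinuous in the limit (test against simple
functions), hence continuous for bounded measurable `w` (apply this to `w` and to `c - w`).
Comparing `hₙ` with the envelopes `⨅ n ≥ N, hₙ` and `⨆ n ≥ N, hₙ` then gives Fatou's lemma and, for
uniformly bounded `hₙ`, the reverse Fatou lemma for the varying measures `μₙ`. Truncating at level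
`K` and controlling the tail by asymptotic uniform integrability removes the bound, so
`∫ hₙ dμₙ → ∫ b dν` whenever `hₙ → b` almost everywhere; applied to the positive and negative parts
this proves the theorem under almost everywhere convergence. Convergence in measure reduces to
that case, since every subsequence has a further subsequence converging almost everywhere.
-/

namespace ENNReal

theorem liminf_add_liminf_le (u v : ℕ → ℝ≥0∞) :
    liminf u atTop + liminf v atTop ≤ liminf (u + v) atTop := by
  simp only [liminf_eq_iSup_iInf_of_nat]
  exact iSup_add_iSup_le fun N M => le_iSup_of_le (max N M) <| le_iInf₂ fun n hn =>
    add_le_add (iInf₂_le n (le_of_max_le_left hn)) (iInf₂_le n (le_of_max_le_right hn))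

theorem sum_liminf_le_liminf_sum {ι : Type*} (s : Finset ι) (u : ι → ℕ → ℝ≥0∞) :
    ∑ i ∈ s, liminf (u i) atTop ≤ liminf (fun n => ∑ i ∈ s, u i n) atTop := by
  classical
  induction s using Finset.induction_on with
  | empty => simp
  | insert i s hi ih =>
    simp only [Finset.sum_insert hi]
    exact (add_le_add le_rfl ih).trans (liminf_add_liminf_le _ _)

theorem limsup_add_liminf_le (u v : ℕ → ℝ≥0∞) :
    limsup u atTop + liminf v atTop ≤ limsup (u + v) atTop := by
  rw [liminf_eq_iSup_iInf_of_nat, ENNReal.add_iSup]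
  refine iSup_le fun N => ?_
  rw [← limsup_add_const _ _ _ (by isBoundedDefault) (by isBoundedDefault)]
  exact limsup_le_limsup <| (eventually_ge_atTop N).mono fun n hn =>
    add_le_add le_rfl (iInf₂_le n hn)

theorem limsup_add_le_add_limsup (u v : ℕ → ℝ≥0∞) :
    limsup (u + v) atTop ≤ limsup u atTop + limsup v atTop := by
  simp only [limsup_eq_iInf_iSup_of_nat]
  rw [ENNReal.iInf_add_iInf fun N M => ⟨max N M, add_le_add
    (biSup_mono fun n hn => (le_max_left N M).trans hn)
    (biSup_mono fun n hn => (le_max_right N M).trans hn)⟩]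
  exact iInf_mono fun N => iSup₂_le fun n hn =>
    add_le_add (le_iSup₂ (f := fun n _ => u n) n hn) (le_iSup₂ (f := fun n _ => v n) n hn)

theorem tendsto_of_le_liminf_of_tendsto_add {a b : ℕ → ℝ≥0∞} {A B : ℝ≥0∞} (hB : B ≠ ∞)
    (ha : A ≤ liminf a atTop) (hb : B ≤ liminf b atTop)
    (hab : Tendsto (fun n => a n + b n) atTop (𝓝 (A + B))) : Tendsto a atTop (𝓝 A) := by
  refine tendsto_of_le_liminf_of_limsup_le ha ?_
  rw [← ENNReal.add_le_add_iff_right hB]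
  calc limsup a atTop + B ≤ limsup a atTop + liminf b atTop := add_le_add le_rfl hb
    _ ≤ limsup (a + b) atTop := limsup_add_liminf_le a b
    _ = A + B := hab.limsup_eq

end ENNReal

namespace EReal

theorem posENN_eq_toENNReal (x : EReal) : x.posENN = x.toENNReal := by
  induction x with
  | coe a => rcases le_total a 0 with h | h <;> simp [posENN, h, abs_def, abs_of_nonneg]
  | _ => simp [posENN]

theorem negENN_eq_toENNReal_neg (x : EReal) : x.negENN = (-x).toENNReal :=
  posENN_eq_toENNReal (-x)

theorem toENNReal_le_abs (x : EReal) : x.toENNReal ≤ x.abs := by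
  induction x with
  | coe a => simpa [abs_def] using ENNReal.ofReal_le_ofReal (le_abs_self a)
  | _ => simp

theorem eq_coe_toReal_of_abs_sub_coe_ne_top {x : EReal} {r : ℝ} (h : (x - r).abs ≠ ∞) :
    x = (x.toReal : EReal) := by
  induction x <;> simp_all

theorem tendsto_nhds_coe_of_abs_sub {α : Type*} {l : Filter α} {x : α → EReal} {r : ℝ}
    (h : Tendsto (fun a => (x a - r).abs) l (𝓝 0)) : Tendsto x l (𝓝 r) := by
  have hfin : ∀ᶠ a in l, x a = ((x a).toReal : EReal) :=
    (h.eventually_lt_const ENNReal.zero_lt_top).mono fun a ha =>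
      eq_coe_toReal_of_abs_sub_coe_ne_top ha.ne
  have hreal : Tendsto (fun a => (x a).toReal) l (𝓝 r) := by
    refine tendsto_iff_edist_tendsto_0.2 (h.congr' (hfin.mono fun a ha => ?_))
    show (x a - r).abs = edist (x a).toReal r
    rw [edist_dist, Real.dist_eq, ha, ← coe_sub, abs_def, toReal_coe]
  exact (tendsto_coe.2 hreal).congr' (hfin.mono fun a ha => ha.symm)

theorem tendsto_coe_ennreal_sub {α : Type*} {l : Filter α} {a b : α → ℝ≥0∞} {A B : ℝ≥0∞}
    (hA : A ≠ ∞) (ha : Tendsto a l (𝓝 A)) (hb : Tendsto b l (𝓝 B)) :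
    Tendsto (fun i => (a i : EReal) - b i) l (𝓝 ((A : EReal) - B)) :=
  (continuousAt_add (p := ((A : EReal), -(B : EReal))) (Or.inl (by simpa using hA))
    (Or.inl (coe_ennreal_ne_bot A))).tendsto.comp
      ((tendsto_coe_ennreal.2 ha).prodMk_nhds (tendsto_coe_ennreal.2 hb).neg)

end EReal

section Setwise

variable {S : Type*} [MeasurableSpace S] {μ : ℕ → Measure S} {ν : Measure S}

theorem SetwiseConv.comp (hsw : SetwiseConv μ ν) {m : ℕ → ℕ} (hm : Tendsto m atTop atTop) :
    SetwiseConv (fun k => μ (m k)) ν :=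
  fun C hC => (hsw C hC).comp hm

theorem SetwiseConv.lintegral_le_liminf (hsw : SetwiseConv μ ν) (w : S → ℝ≥0∞) :
    ∫⁻ s, w s ∂ν ≤ liminf (fun n => ∫⁻ s, w s ∂μ n) atTop := by
  rw [lintegral_def]
  refine iSup₂_le fun φ hφ => ?_
  have hterm (x : ℝ≥0∞) :
      x * ν (φ ⁻¹' {x}) ≤ liminf (fun n => x * μ n (φ ⁻¹' {x})) atTop := by
    rcases eq_or_ne (ν (φ ⁻¹' {x})) 0 with h0 | h0
    · simp [h0]
    · exact (ENNReal.Tendsto.const_mul (hsw _ (φ.measurableSet_fiber x)) (Or.inl h0)).liminf_eq.ge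
  calc φ.lintegral ν ≤ ∑ x ∈ φ.range, liminf (fun n => x * μ n (φ ⁻¹' {x})) atTop :=
        Finset.sum_le_sum fun x _ => hterm x
    _ ≤ liminf (fun n => φ.lintegral (μ n)) atTop := ENNReal.sum_liminf_le_liminf_sum _ _
    _ ≤ liminf (fun n => ∫⁻ s, w s ∂μ n) atTop := liminf_le_liminf <| .of_forall fun n => by
        rw [← φ.lintegral_eq_lintegral]; exact lintegral_mono hφ

theorem SetwiseConv.tendsto_lintegral_of_le [IsFiniteMeasure ν] (hsw : SetwiseConv μ ν)
    {w : S → ℝ≥0∞} (hw : Measurable w) {c : ℝ≥0∞} (hc : c ≠ ∞) (hwc : ∀ s, w s ≤ c) :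
    Tendsto (fun n => ∫⁻ s, w s ∂μ n) atTop (𝓝 (∫⁻ s, w s ∂ν)) := by
  have hsplit (ρ : Measure S) : ∫⁻ s, w s ∂ρ + ∫⁻ s, (c - w s) ∂ρ = c * ρ Set.univ := by
    rw [← lintegral_add_left hw, ← lintegral_const]
    exact lintegral_congr fun s => add_tsub_cancel_of_le (hwc s)
  refine ENNReal.tendsto_of_le_liminf_of_tendsto_add ?_ (hsw.lintegral_le_liminf w)
    (hsw.lintegral_le_liminf fun s => c - w s) ?_
  · exact ne_top_of_le_ne_top (ENNReal.mul_ne_top hc (measure_ne_top ν _))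
      (le_add_self.trans (hsplit ν).le)
  · simp only [hsplit]
    exact ENNReal.Tendsto.const_mul (hsw _ MeasurableSet.univ) (Or.inr hc)

theorem SetwiseConv.lintegral_liminf_le (hsw : SetwiseConv μ ν) {h : ℕ → S → ℝ≥0∞}
    (hh : ∀ n, Measurable (h n)) :
    ∫⁻ s, liminf (fun n => h n s) atTop ∂ν ≤ liminf (fun n => ∫⁻ s, h n s ∂μ n) atTop := by
  calc ∫⁻ s, liminf (fun n => h n s) atTop ∂ν = ⨆ N, ∫⁻ s, ⨅ n ≥ N, h n s ∂ν := by
        simp only [liminf_eq_iSup_iInf_of_nat]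
        exact lintegral_iSup (fun N => .iInf fun n => .iInf fun _ => hh n)
          fun N M hNM s => biInf_mono fun n hn => hNM.trans hn
    _ ≤ _ := iSup_le fun N => (hsw.lintegral_le_liminf _).trans <| liminf_le_liminf <|
        (eventually_ge_atTop N).mono fun n hn => lintegral_mono fun s => iInf₂_le n hn

theorem SetwiseConv.limsup_lintegral_le_of_le [IsFiniteMeasure ν] (hsw : SetwiseConv μ ν)
    {h : ℕ → S → ℝ≥0∞} (hh : ∀ n, Measurable (h n)) {c : ℝ≥0∞} (hc : c ≠ ∞)
    (hhc : ∀ n s, h n s ≤ c) :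
    limsup (fun n => ∫⁻ s, h n s ∂μ n) atTop ≤ ∫⁻ s, limsup (fun n => h n s) atTop ∂ν := by
  have hsup (N : ℕ) : Measurable fun s => ⨆ n ≥ N, h n s := .iSup fun n => .iSup fun _ => hh n
  have hsupc (N : ℕ) (s : S) : ⨆ n ≥ N, h n s ≤ c := iSup₂_le fun n _ => hhc n s
  calc limsup (fun n => ∫⁻ s, h n s ∂μ n) atTop ≤ ⨅ N, ∫⁻ s, ⨆ n ≥ N, h n s ∂ν :=
        le_iInf fun N => by
          rw [← (hsw.tendsto_lintegral_of_le (hsup N) hc (hsupc N)).limsup_eq]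
          exact limsup_le_limsup <| (eventually_ge_atTop N).mono fun n hn =>
            lintegral_mono fun s => le_iSup₂ (f := fun n _ => h n s) n hn
    _ = ∫⁻ s, limsup (fun n => h n s) atTop ∂ν := by
        have hfin : ∫⁻ s, ⨆ n ≥ 0, h n s ∂ν ≠ ∞ :=
          ne_top_of_le_ne_top (ENNReal.mul_ne_top hc (measure_ne_top ν Set.univ))
            ((lintegral_mono (hsupc 0)).trans_eq (lintegral_const c))
        simp only [limsup_eq_iInf_iSup_of_nat]
        exact (lintegral_iInf hsup (fun N M hNM s => biSup_mono fun n hn => hNM.trans hn)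
          hfin).symm

end Setwise

section UnifIntegrable

variable {S : Type*} [MeasurableSpace S] {μ : ℕ → Measure S} {ν : Measure S}

noncomputable def tailLIntegral (ρ : Measure S) (h : S → ℝ≥0∞) (c : ℝ≥0∞) : ℝ≥0∞ :=
  ∫⁻ s in {s | c ≤ h s}, h s ∂ρ

theorem tailLIntegral_mono {ρ : Measure S} {h h' : S → ℝ≥0∞} (hle : ∀ s, h' s ≤ h s)
    (c : ℝ≥0∞) : tailLIntegral ρ h' c ≤ tailLIntegral ρ h c :=
  (lintegral_mono fun s => hle s).trans (lintegral_mono_set fun s hs => le_trans hs (hle s))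

theorem lintegral_le_lintegral_min_add_tailLIntegral {ρ : Measure S} {h : S → ℝ≥0∞}
    (hh : Measurable h) (c : ℝ≥0∞) :
    ∫⁻ s, h s ∂ρ ≤ ∫⁻ s, min (h s) c ∂ρ + tailLIntegral ρ h c := by
  have hA : MeasurableSet {s | c ≤ h s} := measurableSet_le measurable_const hh
  rw [tailLIntegral, ← lintegral_add_compl h hA, add_comm]
  gcongr ?_ + _
  calc ∫⁻ s in {s | c ≤ h s}ᶜ, h s ∂ρ = ∫⁻ s in {s | c ≤ h s}ᶜ, min (h s) c ∂ρ :=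
        setLIntegral_congr_fun hA.compl fun s (hs : ¬c ≤ h s) =>
          (min_eq_left (not_le.1 hs).le).symm
    _ ≤ ∫⁻ s, min (h s) c ∂ρ := setLIntegral_le_lintegral _ _

theorem tailIntegral_eq_tailLIntegral_abs (ρ : Measure S) (f : S → EReal) (K : ℝ) :
    tailIntegral ρ f K = tailLIntegral ρ (fun s => (f s).abs) (ENNReal.ofReal K) := by
  have hset (x : ℝ≥0∞) : (K : EReal) ≤ x ↔ ENNReal.ofReal K ≤ x := by
    rcases le_total K 0 with hK | hK
    · simp [ENNReal.ofReal_of_nonpos hK, (EReal.coe_nonpos.2 hK).trans (EReal.coe_ennreal_nonneg x)]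
    · rw [← EReal.coe_ennreal_le_coe_ennreal_iff, EReal.coe_ennreal_ofReal, max_eq_left hK]
  simp only [tailIntegral, tailLIntegral, hset]

def AsymptUnifIntegrable (μ : ℕ → Measure S) (h : ℕ → S → ℝ≥0∞) : Prop :=
  Tendsto (fun K : ℝ => limsup (fun n => tailLIntegral (μ n) (h n) (ENNReal.ofReal K)) atTop)
    atTop (𝓝 0)

theorem AsymptUnifIntegrable.mono {h h' : ℕ → S → ℝ≥0∞} (hui : AsymptUnifIntegrable μ h)
    (hle : ∀ n s, h' n s ≤ h n s) : AsymptUnifIntegrable μ h' :=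
  tendsto_of_tendsto_of_tendsto_of_le_of_le tendsto_const_nhds hui (fun _ => zero_le)
    fun _ => limsup_le_limsup <| .of_forall fun n => tailLIntegral_mono (hle n) _

theorem AUI.asymptUnifIntegrable_abs {f : ℕ → S → EReal} (haui : AUI μ f) :
    AsymptUnifIntegrable μ fun n s => (f n s).abs := by
  simpa only [AUI, AsymptUnifIntegrable, tailIntegral_eq_tailLIntegral_abs] using haui

theorem AUI.comp {f : ℕ → S → EReal} (haui : AUI μ f) {m : ℕ → ℕ}
    (hm : Tendsto m atTop atTop) : AUI (fun k => μ (m k)) fun k => f (m k) :=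
  tendsto_of_tendsto_of_tendsto_of_le_of_le tendsto_const_nhds haui (fun _ => zero_le)
    fun K => hm.limsup_comp_le_limsup (u := fun n => tailIntegral (μ n) (f n) K)

variable [IsFiniteMeasure ν] {h : ℕ → S → ℝ≥0∞}

theorem SetwiseConv.limsup_lintegral_le_add_limsup_tail (hsw : SetwiseConv μ ν)
    (hh : ∀ n, Measurable (h n)) (K : ℝ) :
    limsup (fun n => ∫⁻ s, h n s ∂μ n) atTop ≤
      ∫⁻ s, limsup (fun n => min (h n s) (ENNReal.ofReal K)) atTop ∂ν +
        limsup (fun n => tailLIntegral (μ n) (h n) (ENNReal.ofReal K)) atTop :=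
  calc limsup (fun n => ∫⁻ s, h n s ∂μ n) atTop
      ≤ limsup (fun n => ∫⁻ s, min (h n s) (ENNReal.ofReal K) ∂μ n +
          tailLIntegral (μ n) (h n) (ENNReal.ofReal K)) atTop :=
        limsup_le_limsup <| .of_forall fun n =>
          lintegral_le_lintegral_min_add_tailLIntegral (hh n) _
    _ ≤ _ := (ENNReal.limsup_add_le_add_limsup _ _).trans <| add_le_add_left
        (hsw.limsup_lintegral_le_of_le (fun n => (hh n).min measurable_const)
          ENNReal.ofReal_ne_top fun _ _ => min_le_right _ _) _

theorem SetwiseConv.limsup_lintegral_le_of_asymptUnifIntegrable (hsw : SetwiseConv μ ν)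
    (hh : ∀ n, Measurable (h n)) (hui : AsymptUnifIntegrable μ h) :
    limsup (fun n => ∫⁻ s, h n s ∂μ n) atTop ≤ ∫⁻ s, limsup (fun n => h n s) atTop ∂ν := by
  refine ENNReal.le_of_forall_pos_le_add fun ε hε _ => ?_
  obtain ⟨K, hK⟩ := (hui.eventually_le_const (ENNReal.coe_pos.2 hε)).exists
  refine (hsw.limsup_lintegral_le_add_limsup_tail hh K).trans (add_le_add ?_ hK)
  exact lintegral_mono fun s => limsup_le_limsup (.of_forall fun n => min_le_left _ _)

theorem SetwiseConv.limsup_lintegral_ne_top (hsw : SetwiseConv μ ν)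
    (hh : ∀ n, Measurable (h n)) (hui : AsymptUnifIntegrable μ h) :
    limsup (fun n => ∫⁻ s, h n s ∂μ n) atTop ≠ ∞ := by
  obtain ⟨K, hK⟩ := (hui.eventually_le_const zero_lt_one).exists
  refine ne_top_of_le_ne_top ?_ ((hsw.limsup_lintegral_le_add_limsup_tail hh K).trans
    (add_le_add ((lintegral_mono fun s => limsup_le_of_le (by isBoundedDefault)
      (.of_forall fun n => min_le_right _ _)).trans_eq (lintegral_const _)) hK))
  exact ENNReal.add_ne_top.2 ⟨ENNReal.mul_ne_top ENNReal.ofReal_ne_top (measure_ne_top ν _),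
    ENNReal.one_ne_top⟩

theorem SetwiseConv.tendsto_lintegral_of_ae_tendsto (hsw : SetwiseConv μ ν)
    (hh : ∀ n, Measurable (h n)) (hui : AsymptUnifIntegrable μ h) {b : S → ℝ≥0∞}
    (hae : ∀ᵐ s ∂ν, Tendsto (fun n => h n s) atTop (𝓝 (b s))) :
    Tendsto (fun n => ∫⁻ s, h n s ∂μ n) atTop (𝓝 (∫⁻ s, b s ∂ν)) := by
  refine tendsto_of_le_liminf_of_limsup_le ?_ ?_
  · calc ∫⁻ s, b s ∂ν = ∫⁻ s, liminf (fun n => h n s) atTop ∂ν :=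
          lintegral_congr_ae (hae.mono fun s hs => hs.liminf_eq.symm)
      _ ≤ _ := hsw.lintegral_liminf_le hh
  · calc _ ≤ ∫⁻ s, limsup (fun n => h n s) atTop ∂ν :=
          hsw.limsup_lintegral_le_of_asymptUnifIntegrable hh hui
      _ = ∫⁻ s, b s ∂ν := lintegral_congr_ae (hae.mono fun s hs => hs.limsup_eq)

theorem SetwiseConv.tendsto_lintegral_comp_of_ae_tendsto (hsw : SetwiseConv μ ν)
    {f : ℕ → S → EReal} (hf : ∀ n, Measurable (f n)) (haui : AUI μ f) {g : S → EReal}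
    (hae : ∀ᵐ s ∂ν, Tendsto (fun n => f n s) atTop (𝓝 (g s)))
    {p : EReal → ℝ≥0∞} (hp : Continuous p) (hp_abs : ∀ x, p x ≤ x.abs) :
    Tendsto (fun n => ∫⁻ s, p (f n s) ∂μ n) atTop (𝓝 (∫⁻ s, p (g s) ∂ν)) ∧
      ∫⁻ s, p (g s) ∂ν ≠ ∞ := by
  have hmeas (n : ℕ) : Measurable fun s => p (f n s) := hp.measurable.comp (hf n)
  have hui := haui.asymptUnifIntegrable_abs.mono fun n s => hp_abs (f n s)
  have htend := hsw.tendsto_lintegral_of_ae_tendsto hmeas hui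
    (hae.mono fun s hs => (hp.tendsto _).comp hs)
  exact ⟨htend, htend.limsup_eq ▸ hsw.limsup_lintegral_ne_top hmeas hui⟩

theorem SetwiseConv.tendsto_eIntegral_of_ae_tendsto (hsw : SetwiseConv μ ν)
    {f : ℕ → S → EReal} (hf : ∀ n, Measurable (f n)) (haui : AUI μ f) {g : S → EReal}
    (hae : ∀ᵐ s ∂ν, Tendsto (fun n => f n s) atTop (𝓝 (g s))) :
    Tendsto (fun n => eIntegral (μ n) (f n)) atTop (𝓝 (eIntegral ν g)) := by
  obtain ⟨hpos, hfin⟩ := hsw.tendsto_lintegral_comp_of_ae_tendsto hf haui hae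
    EReal.continuous_toENNReal EReal.toENNReal_le_abs
  obtain ⟨hneg, -⟩ := hsw.tendsto_lintegral_comp_of_ae_tendsto hf haui hae
    (EReal.continuous_toENNReal.comp continuous_neg)
    fun x => (EReal.toENNReal_le_abs (-x)).trans_eq (EReal.abs_neg x)
  simp only [eIntegral, EReal.posENN_eq_toENNReal, EReal.negENN_eq_toENNReal_neg]
  exact EReal.tendsto_coe_ennreal_sub hfin hpos hneg

end UnifIntegrable

section ConvInMeasure

variable {S : Type*} [MeasurableSpace S] {ν : Measure S} {f : ℕ → S → EReal} {g : S → ℝ}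

theorem ConvInMeasureE.comp (hconv : ConvInMeasureE f g ν) {m : ℕ → ℕ}
    (hm : Tendsto m atTop atTop) : ConvInMeasureE (fun k => f (m k)) g ν :=
  fun ε hε => (hconv ε hε).comp hm

theorem ConvInMeasureE.exists_subseq_ae_tendsto (hconv : ConvInMeasureE f g ν) :
    ∃ φ : ℕ → ℕ, StrictMono φ ∧ ∀ᵐ s ∂ν, Tendsto (fun k => f (φ k) s) atTop (𝓝 (g s)) := by
  -- `ℝ≥0` is a metric space, so `TendstoInMeasure.exists_seq_tendsto_ae` applies to `d`
  set d : ℕ → S → NNReal := fun n s => (min (f n s - g s).abs 1).toNNReal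
  have hd (n : ℕ) (s : S) : (d n s : ℝ≥0∞) = min (f n s - g s).abs 1 :=
    ENNReal.coe_toNNReal (min_lt_of_right_lt ENNReal.one_lt_top).ne
  have hmeas : TendstoInMeasure ν d atTop 0 := by
    refine tendstoInMeasure_of_ne_top fun ε hε hε_top => ?_
    refine tendsto_of_tendsto_of_tendsto_of_le_of_le tendsto_const_nhds
      (hconv ε.toReal (ENNReal.toReal_pos hε.ne' hε_top)) (fun _ => zero_le)
      fun n => measure_mono fun s hs => ?_
    simp only [Set.mem_ofPred_eq, ENNReal.ofReal_toReal hε_top, Pi.zero_apply, edist_nndist,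
      NNReal.nndist_zero_eq_val', hd] at hs ⊢
    exact hs.trans (min_le_left _ _)
  obtain ⟨φ, hφ, hae⟩ := hmeas.exists_seq_tendsto_ae
  refine ⟨φ, hφ, hae.mono fun s hs => EReal.tendsto_nhds_coe_of_abs_sub ?_⟩
  have hmin := ENNReal.tendsto_coe.2 hs
  simp only [hd, Pi.zero_apply, ENNReal.coe_zero] at hmin
  refine hmin.congr' ((hmin.eventually_lt_const zero_lt_one).mono fun k hk => min_eq_left ?_)
  exact ((min_lt_iff.1 hk).resolve_right (lt_irrefl 1)).le

end ConvInMeasure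

theorem lebesgue_setwise_general {S : Type*} [MeasurableSpace S]
    (μ : ℕ → Measure S) (ν : Measure S) [IsFiniteMeasure ν] (hsw : SetwiseConv μ ν)
    (f : ℕ → S → EReal) (hf : ∀ n, Measurable (f n))
    (g : S → ℝ)
    (hconv : ConvInMeasureE f g ν)
    (haui : AUI μ f) :
    Tendsto (fun n => eIntegral (μ n) (f n)) atTop
      (𝓝 (eIntegral ν (fun s => ((g s : ℝ) : EReal)))) := by
  refine tendsto_of_subseq_tendsto fun ns hns => ?_
  obtain ⟨φ, hφ, hae⟩ := (hconv.comp hns).exists_subseq_ae_tendsto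
  have hm : Tendsto (fun k => ns (φ k)) atTop atTop := hns.comp hφ.tendsto_atTop
  exact ⟨φ, (hsw.comp hm).tendsto_eIntegral_of_ae_tendsto (fun k => hf _) (haui.comp hm) hae⟩

/-- Lebesgue's convergence theorem for setwise converging measures (Corollary 5.3). -/
theorem lebesgue_setwise {S : Type*} [MeasurableSpace S]
    (μ : ℕ → Measure S) (ν : Measure S) [IsFiniteMeasure ν] (hsw : SetwiseConv μ ν)
    (f : ℕ → S → EReal) (hf : ∀ n, Measurable (f n))
    (g : S → ℝ) (hg : Measurable g)
    (hconv : ConvInMeasureE f g ν)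
    (haui : AUI μ f) :
    Tendsto (fun n => eIntegral (μ n) (f n)) atTop
      (𝓝 (eIntegral ν (fun s => ((g s : ℝ) : EReal)))) :=
  lebesgue_setwise_general μ ν hsw f hf g hconv haui
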